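/- arXiv:1205.5427 — 2 statements merged into one kernel-verified Lean document; each statement's English description precedes it below -/
import Mathlib

section
/- In the Artin braid group B_{d+1} with generators σ_1, …, σ_d, for all indices 1 ≤ u < v ≤ d the following identity holds: A · σ_d · A^{-1} = B · σ_u · B^{-1}, where A = (σ_v σ_{v+1} ⋯ σ_d) · (σ_u^{-1} σ_{u+1}^{-1} ⋯ σ_d^{-1}) and B = (σ_v σ_{v+1} ⋯ σ_{d-1}) · σ_d^2 · (σ_{d-1} σ_{d-2} ⋯ σ_u). (This is the identity used in computing the half-twists α_{i,j} obtained as preimages of Artin generators under a Kummer cover, expressed in the circular diagram generators.) -/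
/-- The ascending word `σ a * σ (a+1) * ⋯ * σ b` (empty product if `b + 1 ≤ a`). -/
def ascWord {G : Type*} [Group G] (σ : ℕ → G) (a b : ℕ) : G :=
  ((List.range (b + 1 - a)).map (fun i => σ (a + i))).prod

/-- The descending word `σ b * σ (b-1) * ⋯ * σ a` (empty product if `b + 1 ≤ a`). -/
def descWord {G : Type*} [Group G] (σ : ℕ → G) (a b : ℕ) : G :=
  ((List.range (b + 1 - a)).map (fun i => σ (b - i))).prod

lemma ascWord_nil {G : Type*} [Group G] (σ : ℕ → G) (a b : ℕ) (h : b + 1 ≤ a) :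
    ascWord σ a b = 1 := by
  unfold ascWord
  rw [show b + 1 - a = 0 by omega]
  simp

lemma descWord_nil {G : Type*} [Group G] (σ : ℕ → G) (a b : ℕ) (h : b + 1 ≤ a) :
    descWord σ a b = 1 := by
  unfold descWord
  rw [show b + 1 - a = 0 by omega]
  simp

lemma ascWord_succ {G : Type*} [Group G] (σ : ℕ → G) (a b : ℕ) (h : a ≤ b + 1) :
    ascWord σ a (b + 1) = ascWord σ a b * σ (b + 1) := by
  unfold ascWord
  rw [show b + 1 + 1 - a = (b + 1 - a) + 1 by omega, List.range_succ]
  simp only [List.map_append, List.prod_append, List.map_cons, List.map_nil,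
    List.prod_cons, List.prod_nil, mul_one]
  rw [show a + (b + 1 - a) = b + 1 by omega]

lemma descWord_succ {G : Type*} [Group G] (σ : ℕ → G) (a b : ℕ) (h : a ≤ b + 1) :
    descWord σ a (b + 1) = σ (b + 1) * descWord σ a b := by
  unfold descWord
  rw [show b + 1 + 1 - a = (b + 1 - a) + 1 by omega, List.range_succ_eq_map]
  simp only [List.map_cons, List.map_map, List.prod_cons, Nat.sub_zero]
  have heq : List.map ((fun i => σ (b + 1 - i)) ∘ Nat.succ) (List.range (b + 1 - a)) =
      List.map (fun i => σ (b - i)) (List.range (b + 1 - a)) :=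
    List.map_congr_left fun i _ => by simp [Function.comp, Nat.succ_sub_succ]
  rw [heq]

lemma ascWord_inv {G : Type*} [Group G] (σ : ℕ → G) (a b : ℕ) :
    ascWord (fun i => (σ i)⁻¹) a b = (descWord σ a b)⁻¹ := by
  induction b with
  | zero =>
    rcases Nat.eq_zero_or_pos a with rfl | ha
    · simp [ascWord, descWord, List.range_succ]
    · rw [ascWord_nil _ _ _ (by omega), descWord_nil _ _ _ (by omega), inv_one]
  | succ b ih =>
    by_cases h : a ≤ b + 1
    · rw [ascWord_succ _ _ _ h, descWord_succ σ _ _ h, ih, mul_inv_rev]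
    · rw [ascWord_nil _ _ _ (by omega), descWord_nil _ _ _ (by omega), inv_one]

/-- `σ e` commutes with a descending word whose indices are all `≤ e - 2`. -/
lemma comm_descWord {G : Type*} [Group G] (σ : ℕ → G) (d : ℕ)
    (hcomm : ∀ i j, 1 ≤ i → i + 2 ≤ j → j ≤ d → σ i * σ j = σ j * σ i)
    (a : ℕ) (ha : 1 ≤ a) :
    ∀ b e, b + 2 ≤ e → e ≤ d → σ e * descWord σ a b = descWord σ a b * σ e := by
  intro b
  induction b with
  | zero =>
    intro e _ _
    rw [descWord_nil _ _ _ (by omega), mul_one, one_mul]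
  | succ b ih =>
    intro e he hed
    by_cases h : a ≤ b + 1
    · rw [descWord_succ _ _ _ h, ← mul_assoc, ← hcomm (b + 1) e (by omega) (by omega) hed,
        mul_assoc, ih e (by omega) hed, ← mul_assoc]
    · rw [descWord_nil _ _ _ (by omega), mul_one, one_mul]

/-- Pure group-theoretic step used in the induction. -/
lemma key_step {G : Type*} [Group G] (a b s x : G)
    (hc : a * s = s * a)
    (hbr : b * a * b = a * b * a)
    (ih : b * s * b * s = s * b * s * x) :
    a * (b * s) * a * (b * s) = b * s * a * (b * s) * x := by
  calc a * (b * s) * a * (b * s)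
      = a * b * (s * a) * (b * s) := by group
    _ = a * b * (a * s) * (b * s) := by rw [← hc]
    _ = (a * b * a) * (s * b * s) := by group
    _ = (b * a * b) * (s * b * s) := by rw [← hbr]
    _ = b * a * (b * s * b * s) := by group
    _ = b * a * (s * b * s * x) := by rw [ih]
    _ = b * (a * s) * (b * s * x) := by group
    _ = b * (s * a) * (b * s * x) := by rw [hc]
    _ = b * s * a * (b * s) * x := by group

/-- In the Artin braid group `B_{d+1}` with generators `σ 1, …, σ d` (formulated
universally: in any group with elements satisfying the Artin braid relations),
for all `1 ≤ u < v ≤ d`, one has `A σ_d A⁻¹ = B σ_u B⁻¹` where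
`A = (σ_v σ_{v+1} ⋯ σ_d)(σ_u⁻¹ σ_{u+1}⁻¹ ⋯ σ_d⁻¹)` and
`B = (σ_v σ_{v+1} ⋯ σ_{d-1}) σ_d² (σ_{d-1} σ_{d-2} ⋯ σ_u)`. -/
theorem kummer_halftwist_identity {G : Type*} [Group G] (d : ℕ) (σ : ℕ → G)
    (hcomm : ∀ i j, 1 ≤ i → i + 2 ≤ j → j ≤ d → σ i * σ j = σ j * σ i)
    (hbraid : ∀ i, 1 ≤ i → i + 1 ≤ d →
      σ i * σ (i + 1) * σ i = σ (i + 1) * σ i * σ (i + 1))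
    (u v : ℕ) (hu : 1 ≤ u) (huv : u < v) (hv : v ≤ d) :
    (ascWord σ v d * ascWord (fun i => (σ i)⁻¹) u d) * σ d *
        (ascWord σ v d * ascWord (fun i => (σ i)⁻¹) u d)⁻¹ =
      (ascWord σ v (d - 1) * (σ d) ^ 2 * descWord σ u (d - 1)) * σ u *
        (ascWord σ v (d - 1) * (σ d) ^ 2 * descWord σ u (d - 1))⁻¹ := by
  -- The key identity: σ_e T σ_e T = T σ_e T σ_u where T = descWord σ u (e-1)
  have key : ∀ k, u + k ≤ d →
      σ (u + k) * descWord σ u (u + k - 1) * σ (u + k) * descWord σ u (u + k - 1) =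
      descWord σ u (u + k - 1) * σ (u + k) * descWord σ u (u + k - 1) * σ u := by
    intro k
    induction k with
    | zero =>
      intro _
      rw [descWord_nil _ _ _ (by omega)]
      simp
    | succ k ih =>
      intro hk
      have h1 : u + (k + 1) - 1 = u + k := by omega
      rw [h1]
      have hT : descWord σ u (u + k) = σ (u + k) * descWord σ u (u + k - 1) := by
        have := descWord_succ σ u (u + k - 1) (by omega)
        rwa [show u + k - 1 + 1 = u + k by omega] at this
      have hc : σ (u + (k + 1)) * descWord σ u (u + k - 1) =
          descWord σ u (u + k - 1) * σ (u + (k + 1)) :=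
        comm_descWord σ d hcomm u hu (u + k - 1) (u + (k + 1)) (by omega) (by omega)
      have hbr : σ (u + k) * σ (u + (k + 1)) * σ (u + k) =
          σ (u + (k + 1)) * σ (u + k) * σ (u + (k + 1)) := by
        have := hbraid (u + k) (by omega) (by omega)
        rwa [show u + k + 1 = u + (k + 1) by omega] at this
      have ihk := ih (by omega)
      rw [hT]
      exact key_step _ _ _ _ hc hbr ihk
  -- rewrite everything in terms of e = d - 1
  obtain ⟨e, rfl⟩ : ∃ e, d = e + 1 := ⟨d - 1, by omega⟩
  simp only [Nat.add_sub_cancel]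
  rw [ascWord_inv σ u (e + 1), ascWord_succ σ v e (by omega), descWord_succ σ u e (by omega)]
  have hkey := key (e + 1 - u) (by omega)
  rw [show u + (e + 1 - u) = e + 1 by omega, Nat.add_sub_cancel] at hkey
  have hu' : σ u = (descWord σ u e * σ (e + 1) * descWord σ u e)⁻¹ *
      (σ (e + 1) * descWord σ u e * σ (e + 1) * descWord σ u e) := by
    rw [hkey]; group
  rw [hu']
  group
end

section
/- Let f, g ∈ ℂ⟦x,y⟧ be such that the intersection number ν := dim_ℂ ℂ⟦x,y⟧/(f, g) is finite. Then for every n ≥ 1, dim_ℂ ℂ⟦x,y⟧/(f(x^n, y), g(x^n, y)) = n·ν. (This computes the intersection multiplicity at a preimage of a type-1 point of the Kummer transforms of two local branches: if δ_i and δ_j are distinct local branches meeting at a point on exactly one coordinate axis, then their pullbacks satisfy (δ̃_i · δ̃_j)_Q = n (δ_i · δ_j)_P.) -/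
noncomputable section

/-- Formal partial derivative `∂f/∂(x_i)` of a two-variable formal power series. -/
def pderiv2 (i : Fin 2) (f : MvPowerSeries (Fin 2) ℂ) : MvPowerSeries (Fin 2) ℂ :=
  fun e => ((e i : ℂ) + 1) * MvPowerSeries.coeff (e + Finsupp.single i 1) f

/-- Substitution `x ↦ xⁿ` in a two-variable formal power series `f(x,y)`:
the coefficient of `x^a y^b` in `f(xⁿ, y)` is the coefficient of `x^(a/n) y^b` of `f`
when `n ∣ a`, and `0` otherwise. -/
def substX (n : ℕ) (f : MvPowerSeries (Fin 2) ℂ) : MvPowerSeries (Fin 2) ℂ :=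
  fun e => if n ∣ e 0
    then MvPowerSeries.coeff (Finsupp.single 0 (e 0 / n) + Finsupp.single 1 (e 1)) f
    else 0

/-- Substitution `x ↦ xⁿ`, `y ↦ yⁿ` in a two-variable formal power series `f(x,y)`. -/
def substXY (n : ℕ) (f : MvPowerSeries (Fin 2) ℂ) : MvPowerSeries (Fin 2) ℂ :=
  fun e => if n ∣ e 0 ∧ n ∣ e 1
    then MvPowerSeries.coeff (Finsupp.single 0 (e 0 / n) + Finsupp.single 1 (e 1 / n)) f
    else 0

/-- The one-variable power series `f(0, y)`. -/
def restY (f : MvPowerSeries (Fin 2) ℂ) : PowerSeries ℂ :=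
  PowerSeries.mk fun b => MvPowerSeries.coeff (Finsupp.single 1 b) f

/-- The one-variable power series `f(x, 0)`. -/
def restX (f : MvPowerSeries (Fin 2) ℂ) : PowerSeries ℂ :=
  PowerSeries.mk fun a => MvPowerSeries.coeff (Finsupp.single 0 a) f

/-!
`ℂ⟦x,y⟧` is a free module of rank `n` over its subring `ℂ⟦xⁿ,y⟧`, with basis `1, x, …, xⁿ⁻¹`,
and `f ↦ f(xⁿ,y)` is an isomorphism of `ℂ⟦x,y⟧` onto that subring. Hence
`ℂ⟦x,y⟧ ⧸ (f(xⁿ,y), g(xⁿ,y)) ≅ (ℂ⟦x,y⟧ ⧸ (f,g))ⁿ` as `ℂ`-vector spaces.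
-/

namespace AlgHom

section

variable {k A B ι : Type*} [CommRing k] [CommRing A] [CommRing B] [Algebra k A] [Algebra k B]
  [Fintype ι] (φ : A →ₐ[k] B) (b : ι → B)

def sumMul : (ι → A) →ₗ[k] B :=
  ∑ i, LinearMap.mulRight k (b i) ∘ₗ φ.toLinearMap ∘ₗ LinearMap.proj i

@[simp]
theorem sumMul_apply (h : ι → A) : φ.sumMul b h = ∑ i, φ (h i) * b i := by
  simp [sumMul]

variable {φ b}

theorem mul_mem_map_sumMul_pi (hb : Function.Surjective (φ.sumMul b)) {I : Ideal A} {a : A}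
    (ha : a ∈ I) (c : B) :
    φ a * c ∈ (Submodule.pi Set.univ fun _ => I.restrictScalars k).map (φ.sumMul b) := by
  obtain ⟨h, rfl⟩ := hb c
  refine ⟨fun i => a * h i, fun i _ => I.mul_mem_right _ ha, ?_⟩
  simp [Finset.mul_sum, mul_assoc]

theorem map_sumMul_pi (hb : Function.Surjective (φ.sumMul b)) (I : Ideal A) :
    (Submodule.pi Set.univ fun _ => I.restrictScalars k).map (φ.sumMul b) =
      (I.map φ).restrictScalars k := by
  refine le_antisymm ?_ fun z hz => ?_
  · rintro _ ⟨h, hh, rfl⟩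
    rw [sumMul_apply]
    exact Ideal.sum_mem _ fun i _ => Ideal.mul_mem_right _ _ (Ideal.mem_map_of_mem φ (hh i trivial))
  · suffices ∀ c, c * z ∈ (Submodule.pi Set.univ fun _ => I.restrictScalars k).map (φ.sumMul b) by
      simpa using this 1
    refine Submodule.span_induction ?_ (by simp) ?_ ?_ hz
    · rintro _ ⟨a, ha, rfl⟩ c
      rw [mul_comm]
      exact mul_mem_map_sumMul_pi hb ha c
    · intro x y _ _ hx hy c
      rw [mul_add]
      exact add_mem (hx c) (hy c)
    · intro c' x _ hx c
      rw [smul_eq_mul, ← mul_assoc]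
      exact hx _

def quotientMapEquivPi [DecidableEq ι] (hb : Function.Bijective (φ.sumMul b)) (I : Ideal A) :
    (B ⧸ I.map φ) ≃ₗ[k] (ι → A ⧸ I) :=
  (Submodule.Quotient.restrictScalarsEquiv k _).symm ≪≫ₗ
    (Submodule.Quotient.equiv _ _ (LinearEquiv.ofBijective _ hb) (map_sumMul_pi hb.2 I)).symm ≪≫ₗ
    Submodule.quotientPi _ ≪≫ₗ
    LinearEquiv.piCongrRight fun _ => Submodule.Quotient.restrictScalarsEquiv k I

end

theorem finite_quotient_map_and_finrank_eq {k A B ι : Type*} [Field k] [CommRing A] [CommRing B]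
    [Algebra k A] [Algebra k B] [Fintype ι] {φ : A →ₐ[k] B} {b : ι → B}
    (hb : Function.Bijective (φ.sumMul b)) (I : Ideal A) [Module.Finite k (A ⧸ I)] :
    Module.Finite k (B ⧸ I.map φ) ∧
      Module.finrank k (B ⧸ I.map φ) = Fintype.card ι * Module.finrank k (A ⧸ I) := by
  classical
  let e := φ.quotientMapEquivPi hb I
  exact ⟨Module.Finite.equiv e.symm, by simp [e.finrank_eq, Module.finrank_pi_fintype]⟩

end AlgHom

open MvPowerSeries Finsupp

def mulFst (n : ℕ) (d : Fin 2 →₀ ℕ) : Fin 2 →₀ ℕ := single 0 (n * d 0) + single 1 (d 1)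

def divFst (n : ℕ) (e : Fin 2 →₀ ℕ) : Fin 2 →₀ ℕ := single 0 (e 0 / n) + single 1 (e 1)

section Exponents

variable {n : ℕ}

@[simp] theorem mulFst_apply_zero (d : Fin 2 →₀ ℕ) : mulFst n d 0 = n * d 0 := by simp [mulFst]

@[simp] theorem mulFst_apply_one (d : Fin 2 →₀ ℕ) : mulFst n d 1 = d 1 := by simp [mulFst]

@[simp] theorem divFst_apply_zero (e : Fin 2 →₀ ℕ) : divFst n e 0 = e 0 / n := by simp [divFst]

@[simp] theorem divFst_apply_one (e : Fin 2 →₀ ℕ) : divFst n e 1 = e 1 := by simp [divFst]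

theorem ext_fin_two {d e : Fin 2 →₀ ℕ} (h0 : d 0 = e 0) (h1 : d 1 = e 1) : d = e := by
  ext i; fin_cases i <;> assumption

theorem mulFst_injective (hn : n ≠ 0) : Function.Injective (mulFst n) := fun d d' h =>
  ext_fin_two (Nat.eq_of_mul_eq_mul_left (Nat.pos_of_ne_zero hn) (by simpa using congr($h 0)))
    (by simpa using congr($h 1))

theorem mulFst_divFst {e : Fin 2 →₀ ℕ} (h : n ∣ e 0) : mulFst n (divFst n e) = e :=
  ext_fin_two (by simp [Nat.mul_div_cancel' h]) (by simp)

theorem mulFst_divFst_add_single_mod (e : Fin 2 →₀ ℕ) :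
    mulFst n (divFst n e) + single 0 (e 0 % n) = e :=
  ext_fin_two (by simp [Nat.div_add_mod]) (by simp)

theorem divFst_mulFst_add_single {i : ℕ} (hi : i < n) (d : Fin 2 →₀ ℕ) :
    divFst n (mulFst n d + single 0 i) = d :=
  ext_fin_two (by simp [Nat.mul_add_div (i.zero_le.trans_lt hi), Nat.div_eq_of_lt hi]) (by simp)

end Exponents

section SubstX

variable {n : ℕ}

theorem prod_X_pow_X_eq_monomial (d : Fin 2 →₀ ℕ) :
    (d.prod fun s k => (![X 0 ^ n, X 1] s : MvPowerSeries (Fin 2) ℂ) ^ k) =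
      monomial (mulFst n d) 1 := by
  rw [Finsupp.prod_fintype _ _ (by simp), Fin.prod_univ_two, mulFst]
  simp only [Matrix.cons_val_zero, Matrix.cons_val_one, Matrix.cons_val_fin_one]
  rw [← pow_mul, X_pow_eq, X_pow_eq, monomial_mul_monomial, mul_one]

theorem hasSubst_X_pow_X (hn : n ≠ 0) : HasSubst ![(X 0 : MvPowerSeries (Fin 2) ℂ) ^ n, X 1] :=
  hasSubst_of_constantCoeff_zero fun s => by fin_cases s <;> simp [hn]

theorem substX_eq_subst (hn : n ≠ 0) (f : MvPowerSeries (Fin 2) ℂ) :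
    substX n f = subst ![X 0 ^ n, X 1] f := by
  ext e
  simp only [coeff_subst (hasSubst_X_pow_X hn), prod_X_pow_X_eq_monomial, coeff_monomial,
    smul_eq_mul, mul_ite, mul_one, mul_zero]
  by_cases h : n ∣ e 0
  · rw [finsum_eq_single _ (divFst n e) fun d hd => if_neg fun he => hd ?_]
    · rw [if_pos (mulFst_divFst h).symm]
      exact if_pos h
    · exact mulFst_injective hn (by rw [mulFst_divFst h, he])
  · refine (if_neg h).trans (finsum_eq_zero_of_forall_eq_zero fun d => if_neg ?_).symm
    rintro rfl
    exact h (by simp)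

def substXAlgHom (hn : n ≠ 0) : MvPowerSeries (Fin 2) ℂ →ₐ[ℂ] MvPowerSeries (Fin 2) ℂ :=
  substAlgHom (hasSubst_X_pow_X hn)

@[simp] theorem coe_substXAlgHom (hn : n ≠ 0) : ⇑(substXAlgHom hn) = substX n := by
  ext1 f
  rw [substXAlgHom, substAlgHom_apply, substX_eq_subst hn]

end SubstX

section Decomposition

variable {n : ℕ}

theorem coeff_substX_mul_X_pow (p : MvPowerSeries (Fin 2) ℂ) {i : ℕ} (hi : i < n)
    (e : Fin 2 →₀ ℕ) :
    coeff e (substX n p * X 0 ^ i) = if i = e 0 % n then coeff (divFst n e) p else 0 := by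
  rw [X_pow_eq, coeff_mul_monomial, mul_one]
  have hsub : (e - single 0 i : Fin 2 →₀ ℕ) 0 = e 0 - i := by simp
  by_cases hmod : i = e 0 % n
  · subst hmod
    have hq : e 0 - e 0 % n = n * (e 0 / n) := by have := Nat.div_add_mod (e 0) n; omega
    rw [if_pos (single_le_iff.2 (Nat.mod_le _ _)), if_pos rfl]
    refine (if_pos (hsub ▸ hq ▸ dvd_mul_right _ _)).trans
      (congrArg (coeff · p) (ext_fin_two ?_ (by simp)))
    simp [hq, Nat.mul_div_cancel_left _ (Nat.zero_lt_of_lt hi)]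
  · rw [if_neg hmod]
    split_ifs with hle
    · refine if_neg fun ⟨k, hk⟩ => hmod ?_
      rw [hsub] at hk
      rw [show e 0 = n * k + i by have := single_le_iff.1 hle; omega, Nat.mul_add_mod,
        Nat.mod_eq_of_lt hi]
    · rfl

theorem coeff_sum_substX_mul_X_pow (hn : n ≠ 0) (h : Fin n → MvPowerSeries (Fin 2) ℂ)
    (e : Fin 2 →₀ ℕ) :
    coeff e (∑ i : Fin n, substX n (h i) * X 0 ^ (i : ℕ)) =
      coeff (divFst n e) (h ⟨e 0 % n, Nat.mod_lt _ (Nat.pos_of_ne_zero hn)⟩) := by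
  rw [map_sum, Finset.sum_eq_single_of_mem ⟨e 0 % n, Nat.mod_lt _ (Nat.pos_of_ne_zero hn)⟩
    (Finset.mem_univ _) fun i _ hi => ?_]
  · exact (coeff_substX_mul_X_pow _ (Nat.mod_lt _ (Nat.pos_of_ne_zero hn)) e).trans (if_pos rfl)
  · exact (coeff_substX_mul_X_pow _ i.is_lt e).trans (if_neg fun h => hi (Fin.ext h))

theorem bijective_sumMul_substXAlgHom (hn : n ≠ 0) :
    Function.Bijective
      ((substXAlgHom hn).sumMul fun i : Fin n => (X 0 : MvPowerSeries (Fin 2) ℂ) ^ (i : ℕ)) := by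
  let slices (F : MvPowerSeries (Fin 2) ℂ) (i : Fin n) : MvPowerSeries (Fin 2) ℂ :=
    fun d => coeff (mulFst n d + single 0 (i : ℕ)) F
  refine Function.bijective_iff_has_inverse.2 ⟨slices,
    fun h => funext fun i => MvPowerSeries.ext fun d => ?_, fun F => MvPowerSeries.ext fun e => ?_⟩
  · change coeff (mulFst n d + single 0 (i : ℕ)) ((substXAlgHom hn).sumMul _ h) = _
    rw [AlgHom.sumMul_apply, coe_substXAlgHom, coeff_sum_substX_mul_X_pow hn,
      divFst_mulFst_add_single i.is_lt]
    congr
    simp [Nat.mod_eq_of_lt i.is_lt]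
  · rw [AlgHom.sumMul_apply, coe_substXAlgHom, coeff_sum_substX_mul_X_pow hn]
    change coeff (mulFst n (divFst n e) + single 0 (e 0 % n)) F = _
    rw [mulFst_divFst_add_single_mod]

end Decomposition

/-- Intersection multiplicity of Kummer transforms at a preimage of a type-1 point.
Let `f, g ∈ ℂ⟦x,y⟧` with finite intersection number `ν = dim_ℂ ℂ⟦x,y⟧/(f, g)`.
Then for every `n ≥ 1`, `dim_ℂ ℂ⟦x,y⟧/(f(xⁿ,y), g(xⁿ,y)) = n·ν`. -/
theorem kummer_type1_intersection (f g : MvPowerSeries (Fin 2) ℂ)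
    (hfin : Module.Finite ℂ (MvPowerSeries (Fin 2) ℂ ⧸ Ideal.span {f, g}))
    (ν : ℕ)
    (hν : Module.finrank ℂ (MvPowerSeries (Fin 2) ℂ ⧸ Ideal.span {f, g}) = ν)
    (n : ℕ) (hn : 1 ≤ n) :
    Module.Finite ℂ
      (MvPowerSeries (Fin 2) ℂ ⧸ Ideal.span {substX n f, substX n g}) ∧
    Module.finrank ℂ
      (MvPowerSeries (Fin 2) ℂ ⧸ Ideal.span {substX n f, substX n g}) = n * ν := by
  have hn0 : n ≠ 0 := Nat.one_le_iff_ne_zero.1 hn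
  have hmap :
      (Ideal.span {f, g}).map (substXAlgHom hn0) = Ideal.span {substX n f, substX n g} := by
    rw [Ideal.map_span, Set.image_pair, coe_substXAlgHom]
  rw [← hmap, ← hν]
  simpa using AlgHom.finite_quotient_map_and_finrank_eq (bijective_sumMul_substXAlgHom hn0) _
end
end
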